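/- arXiv:1302.1217 — 3 statements merged into one kernel-verified Lean document; each statement's English description precedes it below -/
import Mathlib

section
/- For n ≥ 3, the integral over ℝⁿ of (|y|² - 1)/(1+|y|²)^{n+1} dy equals zero. -/
/-!
In polar coordinates the integral becomes a multiple of the radial integral
`∫₀^∞ r^(n-1) (r² - 1) / (1 + r²)^(n+1) dr`, whose integrand is the derivative of
`-(r / (1 + r²))^n / n`. This antiderivative vanishes at `0` and at `∞`, so the radial
integral is zero.
-/

open MeasureTheory Real Filter Set Topology

theorem tendsto_div_one_add_sq_atTop : Tendsto (fun r : ℝ => r / (1 + r ^ 2)) atTop (𝓝 0) := by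
  refine tendsto_of_tendsto_of_tendsto_of_le_of_le' tendsto_const_nhds tendsto_inv_atTop_zero
    ?_ ?_ <;> filter_upwards [eventually_gt_atTop 0] with r hr
  · positivity
  · rw [div_le_iff₀ (by positivity), inv_mul_eq_div, le_div_iff₀ hr]
    nlinarith

theorem hasDerivAt_div_one_add_sq_pow (m : ℕ) (r : ℝ) :
    HasDerivAt (fun r : ℝ => -(r / (1 + r ^ 2)) ^ (m + 1) / (m + 1))
      (r ^ m * ((r ^ 2 - 1) / (1 + r ^ 2) ^ (m + 2))) r := by
  have hpos : 0 < 1 + r ^ 2 := by positivity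
  have hquot : HasDerivAt (fun r : ℝ => r / (1 + r ^ 2)) ((1 - r ^ 2) / (1 + r ^ 2) ^ 2) r := by
    refine ((hasDerivAt_id' r).fun_div ((hasDerivAt_pow 2 r).const_add 1) hpos.ne').congr_deriv ?_
    push_cast
    ring
  refine (((hquot.fun_pow (m + 1)).fun_neg).div_const ((m : ℝ) + 1)).congr_deriv ?_
  rw [Nat.add_sub_cancel, Nat.cast_succ, div_pow]
  field_simp
  ring

theorem abs_pow_mul_sq_sub_one_div_le {r : ℝ} (hr : 0 ≤ r) (m : ℕ) :
    |r ^ m * ((r ^ 2 - 1) / (1 + r ^ 2) ^ (m + 2))| ≤ (1 + r ^ 2)⁻¹ := by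
  have hpos : 0 < 1 + r ^ 2 := by positivity
  rw [abs_mul, abs_div, abs_of_nonneg (pow_nonneg hr m), abs_of_pos (pow_pos hpos _),
    mul_div_assoc', div_le_iff₀ (pow_pos hpos _)]
  calc r ^ m * |r ^ 2 - 1| ≤ (1 + r ^ 2) ^ m * (1 + r ^ 2) := by
        gcongr
        · nlinarith
        · rw [abs_le]; constructor <;> nlinarith
    _ = (1 + r ^ 2)⁻¹ * (1 + r ^ 2) ^ (m + 2) := by field_simp; ring

theorem integral_Ioi_pow_mul_sq_sub_one_div_eq_zero (m : ℕ) :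
    ∫ r in Ioi (0 : ℝ), r ^ m * ((r ^ 2 - 1) / (1 + r ^ 2) ^ (m + 2)) = 0 := by
  have hint : IntegrableOn (fun r : ℝ => r ^ m * ((r ^ 2 - 1) / (1 + r ^ 2) ^ (m + 2))) (Ioi 0) := by
    refine integrable_inv_one_add_sq.restrict.mono (by fun_prop) ?_
    filter_upwards [ae_restrict_mem measurableSet_Ioi] with r hr
    rw [norm_eq_abs, norm_of_nonneg (by positivity)]
    exact abs_pow_mul_sq_sub_one_div_le (le_of_lt hr) m
  have hlim : Tendsto (fun r : ℝ => -(r / (1 + r ^ 2)) ^ (m + 1) / (m + 1)) atTop (𝓝 0) := by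
    simpa using (tendsto_div_one_add_sq_atTop.pow (m + 1)).neg.div_const ((m : ℝ) + 1)
  rw [integral_Ioi_of_hasDerivAt_of_tendsto'
    (fun r _ => hasDerivAt_div_one_add_sq_pow m r) hint hlim]
  simp

theorem statement5 (n : ℕ) (hn : 3 ≤ n) :
    ∫ y : EuclideanSpace ℝ (Fin n), (‖y‖ ^ 2 - 1) / (1 + ‖y‖ ^ 2) ^ (n + 1) = 0 := by
  obtain ⟨m, rfl⟩ : ∃ m, n = m + 1 := ⟨n - 1, by omega⟩
  rw [integral_fun_norm_addHaar volume (fun r : ℝ => (r ^ 2 - 1) / (1 + r ^ 2) ^ (m + 1 + 1)),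
    finrank_euclideanSpace_fin, Nat.add_sub_cancel]
  simp only [smul_eq_mul, integral_Ioi_pow_mul_sq_sub_one_div_eq_zero, mul_zero, smul_zero]
end

section
/- For n ≥ 3 and any s ∈ ℝ and any unit vector ν ∈ ℝⁿ, the integral F(s) = α_n^{p+1} ∫_{ℝⁿ} (1+|y|²)^{-(n+2)/2} |y + sν|^{-(n-2)} dy equals α_n^{p+1} |Bⁿ| (1+s²)^{-(n-2)/2}, where p = (n+2)/(n-2) and |Bⁿ| is the volume of the unit ball in ℝⁿ. -/
/-!
Kelvin transform: the inversion `z ↦ inversion x 1 z` in the unit sphere about `x` has Jacobian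
`‖z - x‖^(-2n)`, sends `‖y - x‖^(2-n)` to `‖z - x‖^(n-2)`, and turns `1 + ‖y‖²` into
`(1 + ‖x‖²) (‖z - x + a⁻¹ x‖² + a⁻²) / ‖z - x‖²` with `a = 1 + ‖x‖²`. For the exponent
`-(n+2)/2` all powers of `‖z - x‖` cancel, so after a translation and the dilation by `a⁻¹` the
integral is `a^(-(n-2)/2) ∫ (1 + ‖v‖²)^(-(n+2)/2)`. In polar coordinates the last integral is
`n |Bⁿ| ∫₀^∞ r^(n-1) (1 + r²)^(-(n+2)/2) dr`, and `r^n (1 + r²)^(-n/2) / n` is an antiderivative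
of the radial integrand tending to `1/n`.
-/

open MeasureTheory Real Metric Set Module Filter Topology EuclideanGeometry

lemma hasDerivAt_pow_mul_one_add_sq_rpow {n : ℕ} (hn : n ≠ 0) (r : ℝ) :
    HasDerivAt (fun r : ℝ => r ^ n * (1 + r ^ 2) ^ (-((n : ℝ) / 2)))
      (n * (r ^ (n - 1) * (1 + r ^ 2) ^ (-(((n : ℝ) + 2) / 2)))) r := by
  have hpos : (0 : ℝ) < 1 + r ^ 2 := by positivity
  have hsq : HasDerivAt (fun r : ℝ => 1 + r ^ 2) (2 * r) r := by
    simpa using (hasDerivAt_pow 2 r).const_add 1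
  refine ((hasDerivAt_pow n r).mul
    ((hasDerivAt_rpow_const (p := -((n : ℝ) / 2)) (Or.inl hpos.ne')).comp r hsq)).congr_deriv ?_
  have hexp : -((n : ℝ) / 2) - 1 = -(((n : ℝ) + 2) / 2) := by ring
  have hsplit : (1 + r ^ 2) ^ (-((n : ℝ) / 2)) =
      (1 + r ^ 2) ^ (-(((n : ℝ) + 2) / 2)) * (1 + r ^ 2) := by
    rw [← rpow_add_one hpos.ne']; ring_nf
  have hrn : r ^ n = r ^ (n - 1) * r := by
    rw [← pow_succ, Nat.sub_add_cancel (Nat.pos_of_ne_zero hn)]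
  simp only [Function.comp_apply, hexp, hsplit, hrn]
  ring

lemma tendsto_pow_mul_one_add_sq_rpow (n : ℕ) :
    Tendsto (fun r : ℝ => r ^ n * (1 + r ^ 2) ^ (-((n : ℝ) / 2))) atTop (𝓝 1) := by
  have hlim : Tendsto (fun r : ℝ => (r⁻¹ ^ 2 + 1) ^ (-((n : ℝ) / 2))) atTop (𝓝 1) := by
    simpa using ((tendsto_inv_atTop_zero.pow 2).add_const 1).rpow_const
      (p := -((n : ℝ) / 2)) (Or.inl (by norm_num))
  refine hlim.congr' ?_
  filter_upwards [eventually_gt_atTop 0] with r hr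
  have hsplit : 1 + r ^ 2 = r ^ 2 * (r⁻¹ ^ 2 + 1) := by field_simp
  rw [hsplit, mul_rpow (by positivity) (by positivity), ← mul_assoc,
    ← rpow_natCast r 2, ← rpow_mul hr.le, ← rpow_natCast r n, ← rpow_add hr]
  ring_nf
  simp

lemma integral_Ioi_pow_mul_one_add_sq_rpow {n : ℕ} (hn : n ≠ 0) :
    ∫ r in Ioi (0 : ℝ), r ^ (n - 1) * (1 + r ^ 2) ^ (-(((n : ℝ) + 2) / 2)) = (1 / n : ℝ) := by
  have key := integral_Ioi_of_hasDerivAt_of_nonneg'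
    (fun r _ => hasDerivAt_pow_mul_one_add_sq_rpow hn r)
    (fun r (hr : 0 < r) => by positivity) (tendsto_pow_mul_one_add_sq_rpow n)
  rw [integral_const_mul, zero_pow hn, zero_mul, sub_zero] at key
  rw [eq_div_iff (Nat.cast_ne_zero.2 hn), mul_comm, key]

section AddHaar

variable {E : Type*} [NormedAddCommGroup E] [NormedSpace ℝ E] [FiniteDimensional ℝ E]
  [MeasurableSpace E] [BorelSpace E] (μ : Measure E) [μ.IsAddHaarMeasure]

theorem integral_one_add_norm_sq_rpow [Nontrivial E] :
    ∫ x, (1 + ‖x‖ ^ 2) ^ (-(((finrank ℝ E : ℝ) + 2) / 2)) ∂μ = μ.real (ball 0 1) := by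
  have hd : finrank ℝ E ≠ 0 := finrank_pos.ne'
  rw [integral_fun_norm_addHaar μ (fun r => (1 + r ^ 2) ^ (-(((finrank ℝ E : ℝ) + 2) / 2)))]
  simp only [smul_eq_mul, integral_Ioi_pow_mul_one_add_sq_rpow hd, nsmul_eq_mul]
  field_simp

theorem integral_norm_sq_add_sq_rpow {b : ℝ} (hb : 0 < b) (q : ℝ) :
    ∫ x, (‖x‖ ^ 2 + b ^ 2) ^ (-q) ∂μ =
      b ^ ((finrank ℝ E : ℝ) - 2 * q) * ∫ x, (1 + ‖x‖ ^ 2) ^ (-q) ∂μ := by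
  have hscale (x : E) :
      (‖b • x‖ ^ 2 + b ^ 2) ^ (-q) = b ^ (-2 * q) * (1 + ‖x‖ ^ 2) ^ (-q) := by
    rw [norm_smul, norm_of_nonneg hb.le,
      show (b * ‖x‖) ^ 2 + b ^ 2 = b ^ 2 * (1 + ‖x‖ ^ 2) by ring,
      mul_rpow (by positivity) (by positivity), ← rpow_natCast, ← rpow_mul hb.le]
    norm_num
  have key := Measure.integral_comp_smul_of_nonneg μ (fun x : E => (‖x‖ ^ 2 + b ^ 2) ^ (-q)) b
    (hR := hb.le)
  simp only [hscale, integral_const_mul, smul_eq_mul] at key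
  have hdilate : ∫ x, (‖x‖ ^ 2 + b ^ 2) ^ (-q) ∂μ =
      b ^ (finrank ℝ E : ℝ) * (b ^ (-2 * q) * ∫ x, (1 + ‖x‖ ^ 2) ^ (-q) ∂μ) := by
    rw [key, rpow_natCast]; field_simp
  rw [hdilate, ← mul_assoc, ← rpow_add hb]
  ring_nf

end AddHaar

section Inversion

variable {E : Type*} [NormedAddCommGroup E] [InnerProductSpace ℝ E]

lemma one_add_norm_inversion_sq {x z : E} (hz : z ≠ x) :
    1 + ‖inversion x 1 z‖ ^ 2 =
      (1 + ‖x‖ ^ 2) * (‖z - x + (1 + ‖x‖ ^ 2)⁻¹ • x‖ ^ 2 + ((1 + ‖x‖ ^ 2)⁻¹) ^ 2) /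
        ‖z - x‖ ^ 2 := by
  have ht : ‖z - x‖ ≠ 0 := norm_ne_zero_iff.2 (sub_ne_zero.2 hz)
  have ha : 1 + ‖x‖ ^ 2 ≠ 0 := by positivity
  rw [inversion, dist_eq_norm, vsub_eq_sub, vadd_eq_add, norm_add_sq_real, norm_add_sq_real]
  simp only [norm_smul, real_inner_smul_left, real_inner_smul_right, norm_pow, norm_div, norm_one,
    norm_inv, Real.norm_eq_abs, abs_norm, abs_of_pos (by positivity : (0 : ℝ) < 1 + ‖x‖ ^ 2)]
  field_simp
  ring

variable [FiniteDimensional ℝ E]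

lemma abs_det_fderiv_inversion {c x : E} (hx : x ≠ c) (R : ℝ) :
    |((R / dist x c) ^ 2 • ((ℝ ∙ (x - c))ᗮ.reflection : E →L[ℝ] E)).det| =
      (R / dist x c) ^ (2 * finrank ℝ E) := by
  have hrefl : LinearMap.det ((ℝ ∙ (x - c))ᗮ.reflection : E →L[ℝ] E).toLinearMap = -1 := by
    rw [show ((ℝ ∙ (x - c))ᗮ.reflection : E →L[ℝ] E).toLinearMap =
      (ℝ ∙ (x - c))ᗮ.reflection.toLinearEquiv.toLinearMap from rfl, Submodule.det_reflection,
      Submodule.orthogonal_orthogonal, finrank_span_singleton (sub_ne_zero.2 hx), pow_one]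
  rw [ContinuousLinearMap.det, ContinuousLinearMap.toLinearMap_smul, LinearMap.det_smul, hrefl,
    mul_neg_one, abs_neg, abs_pow, abs_of_nonneg (sq_nonneg _), ← pow_mul]

variable [MeasurableSpace E] [BorelSpace E] [Nontrivial E]

lemma measureReal_ball_zero_one :
    volume.real (ball (0 : E) 1) =
      π ^ ((finrank ℝ E : ℝ) / 2) / Gamma ((finrank ℝ E : ℝ) / 2 + 1) := by
  rw [measureReal_def, InnerProductSpace.volume_ball, ENNReal.ofReal_one, one_pow, one_mul,
    ENNReal.toReal_ofReal (by positivity), sqrt_eq_rpow, ← rpow_natCast, ← rpow_mul pi_pos.le]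
  ring_nf

variable (μ : Measure E) [μ.IsAddHaarMeasure]

theorem integral_comp_inversion {F : Type*} [NormedAddCommGroup F] [NormedSpace ℝ F]
    (c : E) {R : ℝ} (hR : R ≠ 0) (g : E → F) :
    ∫ x, (R / dist x c) ^ (2 * finrank ℝ E) • g (inversion c R x) ∂μ = ∫ x, g x ∂μ := by
  have himage : inversion c R '' {c}ᶜ = {c}ᶜ := by
    rw [(inversion_involutive c hR).image_eq_preimage_symm]
    ext x
    simp [inversion_eq_center hR]
  have key := integral_image_eq_integral_abs_det_fderiv_smul μ
    (measurableSet_singleton c).compl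
    (fun x hx => (hasFDerivAt_inversion (R := R) hx).hasFDerivWithinAt)
    (inversion_injective c hR).injOn g
  rw [himage, restrict_compl_singleton] at key
  rw [key]
  refine integral_congr_ae ?_
  filter_upwards [compl_mem_ae_iff.2 (measure_singleton c)] with x hx
  rw [abs_det_fderiv_inversion hx]

theorem integral_one_add_norm_sq_rpow_mul_norm_sub_rpow (x : E) :
    ∫ y, (1 + ‖y‖ ^ 2) ^ (-(((finrank ℝ E : ℝ) + 2) / 2)) *
        ‖y - x‖ ^ (-((finrank ℝ E : ℝ) - 2)) ∂μ =
      (1 + ‖x‖ ^ 2) ^ (-(((finrank ℝ E : ℝ) - 2) / 2)) *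
        ∫ y, (1 + ‖y‖ ^ 2) ^ (-(((finrank ℝ E : ℝ) + 2) / 2)) ∂μ := by
  set d : ℝ := (finrank ℝ E : ℝ)
  set q : ℝ := (d + 2) / 2
  set a : ℝ := 1 + ‖x‖ ^ 2
  have ha : 0 < a := by positivity
  have hkelvin : ∀ z ≠ x, (1 / dist z x) ^ (2 * finrank ℝ E) •
      ((1 + ‖inversion x 1 z‖ ^ 2) ^ (-q) * ‖inversion x 1 z - x‖ ^ (-(d - 2))) =
      a ^ (-q) * (‖z + (a⁻¹ • x - x)‖ ^ 2 + (a⁻¹) ^ 2) ^ (-q) := by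
    intro z hz
    set t := ‖z - x‖
    have ht : 0 < t := norm_pos_iff.2 (sub_ne_zero.2 hz)
    have hdist : ‖inversion x 1 z - x‖ = t⁻¹ := by
      rw [← dist_eq_norm, dist_inversion_center, dist_eq_norm, one_pow, one_div]
    rw [one_add_norm_inversion_sq hz, hdist, dist_eq_norm,
      show z - x + a⁻¹ • x = z + (a⁻¹ • x - x) by abel]
    set A := ‖z + (a⁻¹ • x - x)‖ ^ 2 + (a⁻¹) ^ 2
    have hA : 0 < A := by positivity
    have hjac : (1 / t) ^ (2 * finrank ℝ E) = t ^ (-(2 * d)) := by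
      rw [one_div, inv_pow, ← rpow_natCast, ← rpow_neg ht.le]; push_cast; rfl
    have hweight : (a * A / t ^ 2) ^ (-q) = a ^ (-q) * A ^ (-q) * t ^ (d + 2) := by
      rw [div_rpow (by positivity) (by positivity), mul_rpow ha.le hA.le, rpow_neg (sq_nonneg t),
        ← rpow_natCast, ← rpow_mul ht.le, div_eq_mul_inv, inv_inv]
      congr 2; push_cast; ring
    have hpole : t⁻¹ ^ (-(d - 2)) = t ^ (d - 2) := by
      rw [inv_rpow ht.le, ← rpow_neg ht.le, neg_neg]
    have hcancel : t ^ (-(2 * d)) * t ^ (d + 2) * t ^ (d - 2) = 1 := by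
      rw [← rpow_add ht, ← rpow_add ht, show -(2 * d) + (d + 2) + (d - 2) = 0 by ring, rpow_zero]
    rw [hjac, hweight, hpole, smul_eq_mul]
    linear_combination a ^ (-q) * A ^ (-q) * hcancel
  rw [← integral_comp_inversion μ x one_ne_zero]
  calc ∫ z, (1 / dist z x) ^ (2 * finrank ℝ E) •
        ((1 + ‖inversion x 1 z‖ ^ 2) ^ (-q) * ‖inversion x 1 z - x‖ ^ (-(d - 2))) ∂μ
      = ∫ z, a ^ (-q) * (‖z + (a⁻¹ • x - x)‖ ^ 2 + (a⁻¹) ^ 2) ^ (-q) ∂μ := by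
        refine integral_congr_ae ?_
        filter_upwards [compl_mem_ae_iff.2 (measure_singleton x)] with z hz
        exact hkelvin z hz
    _ = a ^ (-q) * ((a⁻¹) ^ (d - 2 * q) * ∫ y, (1 + ‖y‖ ^ 2) ^ (-q) ∂μ) := by
        rw [integral_const_mul,
          integral_add_right_eq_self (fun u => (‖u‖ ^ 2 + (a⁻¹) ^ 2) ^ (-q)),
          integral_norm_sq_add_sq_rpow μ (inv_pos.2 ha)]
    _ = a ^ (-((d - 2) / 2)) * ∫ y, (1 + ‖y‖ ^ 2) ^ (-q) ∂μ := by
        rw [← mul_assoc, inv_rpow ha.le, ← rpow_neg ha.le, ← rpow_add ha]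
        congr 2; ring

end Inversion

theorem statement7_general (n : ℕ) (s : ℝ) (ν : EuclideanSpace ℝ (Fin n))
    (hν : ‖ν‖ = 1) :
    (((n : ℝ) * ((n : ℝ) - 2)) ^ (((n : ℝ) - 2) / 4)) ^ (((n : ℝ) + 2) / ((n : ℝ) - 2) + 1) *
        ∫ y : EuclideanSpace ℝ (Fin n),
          (1 + ‖y‖ ^ 2) ^ (-(((n : ℝ) + 2) / 2)) * ‖y + s • ν‖ ^ (-((n : ℝ) - 2))
      = (((n : ℝ) * ((n : ℝ) - 2)) ^ (((n : ℝ) - 2) / 4)) ^ (((n : ℝ) + 2) / ((n : ℝ) - 2) + 1) *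
          (Real.pi ^ ((n : ℝ) / 2) / Real.Gamma ((n : ℝ) / 2 + 1)) *
          (1 + s ^ 2) ^ (-(((n : ℝ) - 2) / 2)) := by
  have : Nontrivial (EuclideanSpace ℝ (Fin n)) :=
    nontrivial_of_ne ν 0 (by rintro rfl; simp at hν)
  have key := integral_one_add_norm_sq_rpow_mul_norm_sub_rpow volume (-(s • ν))
  rw [integral_one_add_norm_sq_rpow, measureReal_ball_zero_one, finrank_euclideanSpace_fin] at key
  simp only [sub_neg_eq_add, norm_neg, norm_smul, hν, mul_one, norm_eq_abs, sq_abs] at key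
  rw [key]
  ring

theorem statement7 (n : ℕ) (hn : 3 ≤ n) (s : ℝ) (ν : EuclideanSpace ℝ (Fin n))
    (hν : ‖ν‖ = 1) :
    (((n : ℝ) * ((n : ℝ) - 2)) ^ (((n : ℝ) - 2) / 4)) ^ (((n : ℝ) + 2) / ((n : ℝ) - 2) + 1) *
        ∫ y : EuclideanSpace ℝ (Fin n),
          (1 + ‖y‖ ^ 2) ^ (-(((n : ℝ) + 2) / 2)) * ‖y + s • ν‖ ^ (-((n : ℝ) - 2))
      = (((n : ℝ) * ((n : ℝ) - 2)) ^ (((n : ℝ) - 2) / 4)) ^ (((n : ℝ) + 2) / ((n : ℝ) - 2) + 1) *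
          (Real.pi ^ ((n : ℝ) / 2) / Real.Gamma ((n : ℝ) / 2 + 1)) *
          (1 + s ^ 2) ^ (-(((n : ℝ) - 2) / 2)) :=
  statement7_general n s ν hν
end

section
/- For n ≥ 3, the function U(x) = α_n (1+|x|²)^{-(n-2)/2} satisfies the Green representation formula U(x) = (1/(n(n-2)|Bⁿ|)) ∫_{ℝⁿ} U(y)^{(n+2)/(n-2)} |y-x|^{-(n-2)} dy for all x ∈ ℝⁿ. -/
/-!
Schwinger parametrization, `A ^ (-a) * Γ(a) = ∫₀^∞ s ^ (a - 1) * exp (-s * A) ds`, applied to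
`A = 1 + ‖y‖²`, `a = (n + 2) / 2` and to `B = ‖y - x‖²`, `b = (n - 2) / 2`, with the second
parameter written as `s * v`, turns the `y`-integral into a Gaussian one, equal to
`(π / (s * (1 + v))) ^ (n / 2) * exp (-s * (1 + v * ‖x‖² / (1 + v)))`. Since `a + b = n`, the
`s`-integral is again a Gamma integral, which leaves
`π ^ (n / 2) * Γ(n / 2) * ∫₀^∞ v ^ (b - 1) * (1 + (1 + ‖x‖²) * v) ^ (-(b + 1)) dv`. Since
`n / 2 = b + 1`, that integrand is the derivative of `(v / (1 + c * v)) ^ b / b` for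
`c = 1 + ‖x‖²`, so the integral is `c ^ (-b) / b`. With `Γ(n / 2) = b * Γ(b)` and
`|Bⁿ| = π ^ (n / 2) / Γ(n / 2 + 1)` this gives
`∫ (1 + ‖y‖²) ^ (-(n + 2) / 2) * ‖y - x‖ ^ (2 - n) dy = |Bⁿ| * (1 + ‖x‖²) ^ (-(n - 2) / 2)`.

All integrals are lower Lebesgue integrals of nonnegative functions, so Tonelli's theorem applies
without integrability side conditions.
-/

open MeasureTheory Real

/-- The standard bubble `U_{δ,ξ}`. -/
noncomputable def bubble (n : ℕ) (δ : ℝ) (ξ x : EuclideanSpace ℝ (Fin n)) : ℝ :=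
  ((n : ℝ) * ((n : ℝ) - 2)) ^ (((n : ℝ) - 2) / 4) * δ ^ (((n : ℝ) - 2) / 2) /
    (δ ^ 2 + ‖x - ξ‖ ^ 2) ^ (((n : ℝ) - 2) / 2)

open Set Filter Topology
open scoped ENNReal RealInnerProductSpace

theorem lintegral_rpow_mul_exp_neg_mul_Ioi {a r : ℝ} (ha : 0 < a) (hr : 0 < r) :
    ∫⁻ t in Ioi (0 : ℝ), ENNReal.ofReal (t ^ (a - 1) * exp (-(r * t))) =
      ENNReal.ofReal (r ^ (-a) * Gamma a) := by
  have h := integral_rpow_mul_exp_neg_mul_Ioi ha hr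
  have hpos : 0 < (1 / r) ^ a * Gamma a := by positivity
  rw [← ofReal_integral_eq_lintegral_ofReal (Integrable.of_integral_ne_zero (h ▸ hpos.ne'))
    (ae_restrict_of_forall_mem measurableSet_Ioi fun t (ht : 0 < t) ↦ by positivity), h,
    one_div, inv_rpow hr.le, ← rpow_neg hr.le]

theorem lintegral_Ioi_eq_lintegral_Ioi_comp_mul_left {c : ℝ} (hc : 0 < c)
    (g : ℝ → ℝ≥0∞) :
    ∫⁻ t in Ioi (0 : ℝ), g t = ∫⁻ v in Ioi (0 : ℝ), ENNReal.ofReal c * g (c * v) := by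
  have h := lintegral_image_eq_lintegral_abs_deriv_mul (s := Ioi 0) measurableSet_Ioi
    (fun v _ ↦ ((hasDerivAt_id v).const_mul c).hasDerivWithinAt)
    (mul_right_injective₀ hc.ne').injOn g
  simpa [image_const_mul_Ioi_zero hc, abs_of_pos hc] using h

theorem lintegral_rpow_mul_one_add_mul_rpow_Ioi {a c : ℝ} (ha : 0 < a) (hc : 0 < c) :
    ∫⁻ v in Ioi (0 : ℝ), ENNReal.ofReal (v ^ (a - 1) * (1 + c * v) ^ (-(a + 1))) =
      ENNReal.ofReal (c ^ (-a) / a) := by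
  set g : ℝ → ℝ := fun v ↦ (v / (1 + c * v)) ^ a / a
  have hderiv : ∀ v ∈ Ioi (0 : ℝ),
      HasDerivAt g (v ^ (a - 1) * (1 + c * v) ^ (-(a + 1))) v := by
    intro v (hv : 0 < v)
    have h1 : 0 < 1 + c * v := by positivity
    have hq : HasDerivAt (fun v ↦ v / (1 + c * v)) (((1 + c * v) ^ 2)⁻¹) v := by
      refine ((hasDerivAt_id v).div ((hasDerivAt_id v).const_mul c |>.const_add 1)
        h1.ne').congr_deriv ?_
      simp only [id, mul_one]
      field_simp
      ring
    refine ((hq.rpow_const (Or.inl (by positivity))).div_const a).congr_deriv ?_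
    rw [div_rpow hv.le h1.le, rpow_neg h1.le, rpow_sub_one h1.ne', rpow_add_one h1.ne']
    field_simp
  have hnonneg : ∀ v ∈ Ioi (0 : ℝ), 0 ≤ v ^ (a - 1) * (1 + c * v) ^ (-(a + 1)) :=
    fun v (hv : 0 < v) ↦ by positivity
  have hcont : ContinuousWithinAt g (Ici 0) 0 :=
    ((ContinuousAt.div continuousAt_id (by fun_prop) (by simp)).rpow_const
      (Or.inr ha.le)).div_const a |>.continuousWithinAt
  have hlim : Tendsto g atTop (𝓝 (c ^ (-a) / a)) := by
    have hq : Tendsto (fun v : ℝ ↦ v / (1 + c * v)) atTop (𝓝 c⁻¹) := by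
      have h := (tendsto_inv_atTop_zero.add_const c).inv₀ (by simpa using hc.ne')
      rw [zero_add] at h
      refine h.congr' ?_
      filter_upwards [eventually_gt_atTop 0] with v hv
      field_simp
    have := ((continuousAt_rpow_const _ a (Or.inl (inv_pos.2 hc).ne')).tendsto.comp hq).div_const a
    simpa [g, Function.comp_def, inv_rpow hc.le, rpow_neg hc.le] using this
  rw [← ofReal_integral_eq_lintegral_ofReal
      (integrableOn_Ioi_deriv_of_nonneg hcont hderiv hnonneg hlim)
      (ae_restrict_of_forall_mem measurableSet_Ioi hnonneg),
    integral_Ioi_of_hasDerivAt_of_nonneg hcont hderiv hnonneg hlim]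
  simp [g, zero_rpow ha.ne']

theorem ofReal_rpow_neg_mul_rpow_neg_eq_lintegral {A B a b : ℝ} (hA : 0 < A) (hB : 0 < B)
    (ha : 0 < a) (hb : 0 < b) :
    ENNReal.ofReal (A ^ (-a) * B ^ (-b) * (Gamma a * Gamma b)) =
      ∫⁻ v in Ioi (0 : ℝ), ∫⁻ s in Ioi (0 : ℝ),
        ENNReal.ofReal (v ^ (b - 1) * s ^ (a + b - 1) * exp (-(s * (A + v * B)))) := by
  calc ENNReal.ofReal (A ^ (-a) * B ^ (-b) * (Gamma a * Gamma b))
      = ENNReal.ofReal (A ^ (-a) * Gamma a) * ENNReal.ofReal (B ^ (-b) * Gamma b) := by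
        rw [← ENNReal.ofReal_mul (by positivity)]
        ring_nf
    _ = ∫⁻ s in Ioi (0 : ℝ), ∫⁻ t in Ioi (0 : ℝ),
          ENNReal.ofReal (s ^ (a - 1) * exp (-(A * s))) *
            ENNReal.ofReal (t ^ (b - 1) * exp (-(B * t))) := by
        simp_rw [← lintegral_rpow_mul_exp_neg_mul_Ioi ha hA,
          ← lintegral_rpow_mul_exp_neg_mul_Ioi hb hB,
          lintegral_const_mul' _ _ ENNReal.ofReal_ne_top]
        rw [lintegral_mul_const _ (by fun_prop)]
    _ = ∫⁻ s in Ioi (0 : ℝ), ∫⁻ v in Ioi (0 : ℝ),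
          ENNReal.ofReal (v ^ (b - 1) * s ^ (a + b - 1) * exp (-(s * (A + v * B)))) := by
        refine setLIntegral_congr_fun measurableSet_Ioi fun s (hs : 0 < s) ↦ ?_
        rw [lintegral_Ioi_eq_lintegral_Ioi_comp_mul_left hs]
        refine setLIntegral_congr_fun measurableSet_Ioi fun v (hv : 0 < v) ↦ ?_
        rw [← ENNReal.ofReal_mul (by positivity), ← ENNReal.ofReal_mul hs.le]
        congr 1
        rw [mul_rpow hs.le hv.le, show a + b - 1 = (a - 1) + (b - 1) + 1 by ring,
          rpow_add hs, rpow_add hs, Real.rpow_one, mul_add, neg_add, exp_add]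
        ring_nf
    _ = _ := lintegral_lintegral_swap (by fun_prop)

theorem mul_sq_norm_add_mul_sq_norm_sub {V : Type*} [NormedAddCommGroup V] [InnerProductSpace ℝ V]
    {p q : ℝ} (hpq : p + q ≠ 0) (x y : V) :
    p * ‖y‖ ^ 2 + q * ‖y - x‖ ^ 2 =
      (p + q) * ‖y - (q / (p + q)) • x‖ ^ 2 + p * q / (p + q) * ‖x‖ ^ 2 := by
  rw [norm_sub_sq_real, norm_sub_sq_real, norm_smul, inner_smul_right, real_inner_comm,
    Real.norm_eq_abs, mul_pow, sq_abs]
  field_simp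
  ring

section EuclideanIntegrals

variable {V : Type*} [NormedAddCommGroup V] [InnerProductSpace ℝ V] [FiniteDimensional ℝ V]
  [MeasurableSpace V] [BorelSpace V]

theorem lintegral_exp_neg_mul_sq_norm_sub {b : ℝ} (hb : 0 < b) (c : V) :
    ∫⁻ y : V, ENNReal.ofReal (exp (-b * ‖y - c‖ ^ 2)) =
      ENNReal.ofReal ((π / b) ^ (Module.finrank ℝ V / 2 : ℝ)) := by
  have h := GaussianFourier.integral_rexp_neg_mul_sq_norm (V := V) hb
  rw [lintegral_sub_right_eq_self (fun y ↦ ENNReal.ofReal (exp (-b * ‖y‖ ^ 2))) c,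
    ← ofReal_integral_eq_lintegral_ofReal (Integrable.of_integral_ne_zero (by rw [h]; positivity))
      (ae_of_all _ fun y ↦ (exp_pos _).le), h]

theorem lintegral_exp_neg_mul_sq_norm_add_mul_sq_norm_sub {p q : ℝ} (hp : 0 < p) (hq : 0 ≤ q)
    (x : V) :
    ∫⁻ y : V, ENNReal.ofReal (exp (-(p * ‖y‖ ^ 2 + q * ‖y - x‖ ^ 2))) =
      ENNReal.ofReal ((π / (p + q)) ^ (Module.finrank ℝ V / 2 : ℝ) *
        exp (-(p * q / (p + q) * ‖x‖ ^ 2))) := by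
  have hpq : 0 < p + q := by positivity
  simp_rw [mul_sq_norm_add_mul_sq_norm_sub hpq.ne', neg_add, exp_add,
    ENNReal.ofReal_mul (exp_pos _).le, ← neg_mul]
  rw [lintegral_mul_const' _ _ ENNReal.ofReal_ne_top, lintegral_exp_neg_mul_sq_norm_sub hpq,
    ← ENNReal.ofReal_mul (by positivity), neg_mul]

theorem lintegral_exp_neg_mul_one_add_sq_norm_add_mul_sq_norm_sub {s v : ℝ} (hs : 0 < s)
    (hv : 0 ≤ v) (x : V) :
    ∫⁻ y : V, ENNReal.ofReal (exp (-(s * ((1 + ‖y‖ ^ 2) + v * ‖y - x‖ ^ 2)))) =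
      ENNReal.ofReal ((π / (s * (1 + v))) ^ (Module.finrank ℝ V / 2 : ℝ) *
        exp (-((1 + v * ‖x‖ ^ 2 / (1 + v)) * s))) := by
  have hsplit : ∀ y : V, exp (-(s * ((1 + ‖y‖ ^ 2) + v * ‖y - x‖ ^ 2))) =
      exp (-s) * exp (-(s * ‖y‖ ^ 2 + s * v * ‖y - x‖ ^ 2)) := fun y ↦ by
    rw [← exp_add]; ring_nf
  simp_rw [hsplit, ENNReal.ofReal_mul (exp_pos _).le]
  rw [lintegral_const_mul' _ _ ENNReal.ofReal_ne_top,
    lintegral_exp_neg_mul_sq_norm_add_mul_sq_norm_sub hs (by positivity),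
    ← ENNReal.ofReal_mul (exp_pos _).le, mul_left_comm, ← exp_add]
  have h1v : 0 < 1 + v := by positivity
  congr 3
  · ring
  · field_simp
    ring

theorem lintegral_Ioi_lintegral_rpow_mul_exp_neg_mul_one_add_sq_norm_add_mul_sq_norm_sub
    (hV : 0 < Module.finrank ℝ V) {v : ℝ} (hv : 0 < v) (x : V) :
    ∫⁻ s in Ioi (0 : ℝ), ∫⁻ y : V,
        ENNReal.ofReal (s ^ ((Module.finrank ℝ V : ℝ) - 1) *
          exp (-(s * ((1 + ‖y‖ ^ 2) + v * ‖y - x‖ ^ 2)))) =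
      ENNReal.ofReal (π ^ (Module.finrank ℝ V / 2 : ℝ) * Gamma (Module.finrank ℝ V / 2) *
        (1 + (1 + ‖x‖ ^ 2) * v) ^ (-(Module.finrank ℝ V / 2 : ℝ))) := by
  set d : ℝ := (Module.finrank ℝ V : ℝ)
  have h1v : 0 < 1 + v := by positivity
  set c := 1 + v * ‖x‖ ^ 2 / (1 + v)
  have hc : 0 < c := by positivity
  have hgauss : ∀ s ∈ Ioi (0 : ℝ), ∫⁻ y : V, ENNReal.ofReal (s ^ (d - 1) *
      exp (-(s * ((1 + ‖y‖ ^ 2) + v * ‖y - x‖ ^ 2)))) =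
        ENNReal.ofReal (π ^ (d / 2) * (1 + v) ^ (-(d / 2))) *
          ENNReal.ofReal (s ^ (d / 2 - 1) * exp (-(c * s))) := by
    intro s (hs : 0 < s)
    simp_rw [ENNReal.ofReal_mul (rpow_nonneg hs.le _)]
    rw [lintegral_const_mul' _ _ ENNReal.ofReal_ne_top,
      lintegral_exp_neg_mul_one_add_sq_norm_add_mul_sq_norm_sub hs hv.le,
      ← ENNReal.ofReal_mul (by positivity), ← ENNReal.ofReal_mul (by positivity),
      ← ENNReal.ofReal_mul (by positivity)]
    congr 1
    rw [div_rpow pi_pos.le (by positivity), mul_rpow hs.le h1v.le, rpow_neg h1v.le,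
      show d / 2 - 1 = (d - 1) + -(d / 2) by ring, rpow_add hs, rpow_neg hs.le]
    simp only [d, c]
    field_simp
  have hc' : (1 + v) * c = 1 + (1 + ‖x‖ ^ 2) * v := by
    simp only [c]
    field_simp
    ring
  rw [setLIntegral_congr_fun measurableSet_Ioi hgauss,
    lintegral_const_mul' _ _ ENNReal.ofReal_ne_top,
    lintegral_rpow_mul_exp_neg_mul_Ioi (by positivity) hc, ← ENNReal.ofReal_mul (by positivity),
    ← hc', mul_rpow h1v.le hc.le]
  congr 1
  ring

theorem lintegral_one_add_sq_norm_rpow_neg_mul_sq_norm_sub_rpow_neg_eq_lintegral [Nontrivial V]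
    {a b : ℝ} (ha : 0 < a) (hb : 0 < b) (x : V) :
    ∫⁻ y : V, ENNReal.ofReal
        ((1 + ‖y‖ ^ 2) ^ (-a) * (‖y - x‖ ^ 2) ^ (-b) * (Gamma a * Gamma b)) =
      ∫⁻ v in Ioi (0 : ℝ), ∫⁻ s in Ioi (0 : ℝ), ∫⁻ y : V, ENNReal.ofReal (v ^ (b - 1) *
        s ^ (a + b - 1) * exp (-(s * ((1 + ‖y‖ ^ 2) + v * ‖y - x‖ ^ 2)))) := by
  have hrep : ∀ᵐ y : V,
      ENNReal.ofReal ((1 + ‖y‖ ^ 2) ^ (-a) * (‖y - x‖ ^ 2) ^ (-b) * (Gamma a * Gamma b)) =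
        ∫⁻ v in Ioi (0 : ℝ), ∫⁻ s in Ioi (0 : ℝ), ENNReal.ofReal (v ^ (b - 1) *
          s ^ (a + b - 1) * exp (-(s * ((1 + ‖y‖ ^ 2) + v * ‖y - x‖ ^ 2)))) := by
    -- At `y = x` the left side is `0` (as `0 ^ (-b) = 0`) but the right side is `∞`.
    filter_upwards [compl_mem_ae_iff.2 (measure_singleton x)] with y (hy : y ≠ x)
    exact ofReal_rpow_neg_mul_rpow_neg_eq_lintegral (by positivity)
      (pow_pos (norm_pos_iff.2 (sub_ne_zero.2 hy)) 2) ha hb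
  rw [lintegral_congr_ae hrep, lintegral_lintegral_swap (by fun_prop)]
  exact lintegral_congr fun v ↦ lintegral_lintegral_swap (by fun_prop)

theorem lintegral_one_add_sq_norm_rpow_mul_norm_sub_rpow (hV : 2 < Module.finrank ℝ V) (x : V) :
    ∫⁻ y : V, ENNReal.ofReal ((1 + ‖y‖ ^ 2) ^ (-(((Module.finrank ℝ V : ℝ) + 2) / 2)) *
        ‖y - x‖ ^ (-((Module.finrank ℝ V : ℝ) - 2))) =
      ENNReal.ofReal (π ^ (Module.finrank ℝ V / 2 : ℝ) / Gamma (Module.finrank ℝ V / 2 + 1) *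
        (1 + ‖x‖ ^ 2) ^ (-(((Module.finrank ℝ V : ℝ) - 2) / 2))) := by
  have : Nontrivial V := Module.nontrivial_of_finrank_pos (R := ℝ) (by omega)
  have hd : (2 : ℝ) < Module.finrank ℝ V := by exact_mod_cast hV
  set d : ℝ := (Module.finrank ℝ V : ℝ)
  have hb : 0 < d / 2 - 1 := by linarith
  have hΓ : 0 < Gamma (d / 2 + 1) * Gamma (d / 2 - 1) :=
    mul_pos (Gamma_pos_of_pos (by linarith)) (Gamma_pos_of_pos hb)
  have hexponents : ∀ y : V, (1 + ‖y‖ ^ 2) ^ (-((d + 2) / 2)) * ‖y - x‖ ^ (-(d - 2)) =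
      (1 + ‖y‖ ^ 2) ^ (-(d / 2 + 1)) * (‖y - x‖ ^ 2) ^ (-(d / 2 - 1)) := by
    intro y
    rw [← rpow_natCast ‖y - x‖, ← rpow_mul (norm_nonneg _)]
    ring_nf
  have hinner : ∀ v ∈ Ioi (0 : ℝ), ∫⁻ s in Ioi (0 : ℝ), ∫⁻ y : V, ENNReal.ofReal
      (v ^ (d / 2 - 1 - 1) * s ^ (d / 2 + 1 + (d / 2 - 1) - 1) *
        exp (-(s * ((1 + ‖y‖ ^ 2) + v * ‖y - x‖ ^ 2)))) =
      ENNReal.ofReal (π ^ (d / 2) * Gamma (d / 2)) * ENNReal.ofReal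
        (v ^ (d / 2 - 1 - 1) * (1 + (1 + ‖x‖ ^ 2) * v) ^ (-(d / 2 - 1 + 1))) := by
    intro v (hv : 0 < v)
    simp only [show d / 2 + 1 + (d / 2 - 1) - 1 = d - 1 by ring, mul_assoc,
      ENNReal.ofReal_mul (rpow_nonneg hv.le _), lintegral_const_mul' _ _ ENNReal.ofReal_ne_top]
    rw [lintegral_Ioi_lintegral_rpow_mul_exp_neg_mul_one_add_sq_norm_add_mul_sq_norm_sub
      (by omega) hv x, ← ENNReal.ofReal_mul (by positivity),
      ← ENNReal.ofReal_mul (by positivity), ← ENNReal.ofReal_mul (by positivity)]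
    congr 1
    simp only [d]
    ring_nf
  suffices h : ∫⁻ y : V, ENNReal.ofReal ((1 + ‖y‖ ^ 2) ^ (-((d + 2) / 2)) *
      ‖y - x‖ ^ (-(d - 2)) * (Gamma (d / 2 + 1) * Gamma (d / 2 - 1))) =
        ENNReal.ofReal (π ^ (d / 2) / Gamma (d / 2 + 1) * (1 + ‖x‖ ^ 2) ^ (-((d - 2) / 2)) *
          (Gamma (d / 2 + 1) * Gamma (d / 2 - 1))) by
    simp_rw [ENNReal.ofReal_mul' hΓ.le, lintegral_mul_const' _ _ ENNReal.ofReal_ne_top] at h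
    exact (ENNReal.mul_left_inj (by simpa using hΓ) ENNReal.ofReal_ne_top).1 h
  simp_rw [hexponents]
  rw [lintegral_one_add_sq_norm_rpow_neg_mul_sq_norm_sub_rpow_neg_eq_lintegral (by linarith) hb,
    setLIntegral_congr_fun measurableSet_Ioi hinner,
    lintegral_const_mul' _ _ ENNReal.ofReal_ne_top,
    lintegral_rpow_mul_one_add_mul_rpow_Ioi hb (by positivity),
    ← ENNReal.ofReal_mul (by positivity)]
  congr 1
  have hΓd : Gamma (d / 2) = (d / 2 - 1) * Gamma (d / 2 - 1) := by
    rw [← Gamma_add_one hb.ne']; ring_nf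
  have hd2 : d - 2 ≠ 0 := by linarith
  rw [hΓd, show -((d - 2) / 2) = -(d / 2 - 1) by ring]
  field_simp

theorem integral_one_add_sq_norm_rpow_mul_norm_sub_rpow (hV : 2 < Module.finrank ℝ V) (x : V) :
    ∫ y : V, (1 + ‖y‖ ^ 2) ^ (-(((Module.finrank ℝ V : ℝ) + 2) / 2)) *
        ‖y - x‖ ^ (-((Module.finrank ℝ V : ℝ) - 2)) =
      π ^ (Module.finrank ℝ V / 2 : ℝ) / Gamma (Module.finrank ℝ V / 2 + 1) *
        (1 + ‖x‖ ^ 2) ^ (-(((Module.finrank ℝ V : ℝ) - 2) / 2)) := by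
  rw [integral_eq_lintegral_of_nonneg_ae (ae_of_all _ fun y ↦ by positivity) (by fun_prop),
    lintegral_one_add_sq_norm_rpow_mul_norm_sub_rpow hV, ENNReal.toReal_ofReal (by positivity)]

end EuclideanIntegrals

theorem bubble_one_zero (n : ℕ) (z : EuclideanSpace ℝ (Fin n)) :
    bubble n 1 0 z =
      ((n : ℝ) * ((n : ℝ) - 2)) ^ (((n : ℝ) - 2) / 4) *
        (1 + ‖z‖ ^ 2) ^ (-(((n : ℝ) - 2) / 2)) := by
  rw [bubble, sub_zero, one_pow, one_rpow, mul_one, rpow_neg (by positivity), div_eq_mul_inv]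

theorem bubble_one_zero_rpow {n : ℕ} (hn : 2 < n) (z : EuclideanSpace ℝ (Fin n)) :
    bubble n 1 0 z ^ (((n : ℝ) + 2) / ((n : ℝ) - 2)) =
      (n : ℝ) * ((n : ℝ) - 2) * ((n : ℝ) * ((n : ℝ) - 2)) ^ (((n : ℝ) - 2) / 4) *
        (1 + ‖z‖ ^ 2) ^ (-(((n : ℝ) + 2) / 2)) := by
  have hn' : (2 : ℝ) < n := by exact_mod_cast hn
  have hc : 0 < (n : ℝ) * ((n : ℝ) - 2) := by nlinarith
  have hn2 : (n : ℝ) - 2 ≠ 0 := by linarith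
  rw [bubble_one_zero, mul_rpow (by positivity) (by positivity), ← rpow_mul hc.le,
    ← rpow_mul (by positivity),
    show ((n : ℝ) - 2) / 4 * (((n : ℝ) + 2) / ((n : ℝ) - 2)) = 1 + ((n : ℝ) - 2) / 4 by
      field_simp; ring,
    show -(((n : ℝ) - 2) / 2) * (((n : ℝ) + 2) / ((n : ℝ) - 2)) = -(((n : ℝ) + 2) / 2) by
      field_simp,
    rpow_add hc, Real.rpow_one]

theorem statement8 (n : ℕ) (hn : 3 ≤ n) (x : EuclideanSpace ℝ (Fin n)) :
    bubble n 1 0 x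
      = (1 / ((n : ℝ) * ((n : ℝ) - 2) *
          (Real.pi ^ ((n : ℝ) / 2) / Real.Gamma ((n : ℝ) / 2 + 1)))) *
        ∫ y : EuclideanSpace ℝ (Fin n),
          bubble n 1 0 y ^ (((n : ℝ) + 2) / ((n : ℝ) - 2)) * ‖y - x‖ ^ (-((n : ℝ) - 2)) := by
  have hI := integral_one_add_sq_norm_rpow_mul_norm_sub_rpow
    (V := EuclideanSpace ℝ (Fin n)) (by simp; omega) x
  simp only [finrank_euclideanSpace_fin] at hI
  simp_rw [bubble_one_zero_rpow (by omega : 2 < n), mul_assoc, integral_const_mul, hI,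
    bubble_one_zero]
  have hn' : (3 : ℝ) ≤ n := by exact_mod_cast hn
  have : 0 < Gamma ((n : ℝ) / 2 + 1) := Gamma_pos_of_pos (by positivity)
  have : 0 < π ^ ((n : ℝ) / 2) := by positivity
  have : (n : ℝ) - 2 ≠ 0 := by linarith
  field_simp
end
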